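/- arXiv:1708.05834 — 3 statements merged into one kernel-verified Lean document; each statement's English description precedes it below -/
import Mathlib

section
/- For all real numbers u > 0 and α > 0, ∫_0^{u^α} √( ln( 2 u ε^{−1/α} + 1 ) ) dε ≤ C(α) u^α. -/
open MeasureTheory ProbabilityTheory Real Filter Finset Set Topology

/-- Orlicz norm associated with the Young function φ(x) = exp(x²) − 1. -/
noncomputable def orliczNorm {Ω : Type*} [MeasurableSpace Ω] (P : Measure Ω) (X : Ω → ℝ) : ℝ :=
  sInf {c : ℝ | 0 < c ∧ ∫ ω, (Real.exp ((|X ω| / c) ^ 2) - 1) ∂P ≤ 1}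

/-- Membership in the Orlicz space L^φ(Ω): E[φ(a|X|)] < ∞ for some a > 0. -/
def MemLphi {Ω : Type*} [MeasurableSpace Ω] (P : Measure Ω) (X : Ω → ℝ) : Prop :=
  ∃ a : ℝ, 0 < a ∧ Integrable (fun ω => Real.exp ((a * |X ω|) ^ 2) - 1) P

/-- The constant C(α) = (2^{2α+2}/√α) ∫_{√(α ln 3)}^∞ x² e^{−x²} dx. -/
noncomputable def Cconst (α : ℝ) : ℝ :=
  (2 : ℝ) ^ (2 * α + 2) / Real.sqrt α *
    ∫ x in Set.Ioi (Real.sqrt (α * Real.log 3)), x ^ 2 * Real.exp (-x ^ 2)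

/-- `X` is subgaussian with admissible constant `c`:
E[exp(tX)] ≤ exp(c²t²/2) for all t (stated with the lower integral,
which in particular encodes finiteness of the exponential moments). -/
def IsSubgaussianWith {Ω : Type*} [MeasurableSpace Ω] (P : Measure Ω) (X : Ω → ℝ) (c : ℝ) : Prop :=
  0 ≤ c ∧ ∀ t : ℝ, ∫⁻ ω, ENNReal.ofReal (Real.exp (t * X ω)) ∂P
    ≤ ENNReal.ofReal (Real.exp (c ^ 2 * t ^ 2 / 2))

/-- `X` is subgaussian. -/
def Subgaussian {Ω : Type*} [MeasurableSpace Ω] (P : Measure Ω) (X : Ω → ℝ) : Prop :=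
  ∃ c : ℝ, IsSubgaussianWith P X c

/-- The subgaussian standard τ(X). -/
noncomputable def subgStd {Ω : Type*} [MeasurableSpace Ω] (P : Measure Ω) (X : Ω → ℝ) : ℝ :=
  sInf {c : ℝ | IsSubgaussianWith P X c}

/-- Negative dependence of a sequence of random variables. -/
def NegDep {Ω : Type*} [MeasurableSpace Ω] (P : Measure Ω) (X : ℕ → Ω → ℝ) : Prop :=
  ∀ (s : Finset ℕ) (x : ℕ → ℝ),
    P {ω | ∀ k ∈ s, X k ω ≤ x k} ≤ ∏ k ∈ s, P {ω | X k ω ≤ x k} ∧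
    P {ω | ∀ k ∈ s, x k < X k ω} ≤ ∏ k ∈ s, P {ω | x k < X k ω}

/-- A (𝓑, c²)-conditionally subgaussian sequence (relevant indices k ≥ 1):
a martingale difference sequence w.r.t. the filtration `B` (with `B 0` trivial)
whose conditional moment generating functions satisfy the subgaussian bound. -/
def CondSubgaussianSeq {Ω : Type*} {mΩ : MeasurableSpace Ω} (P : Measure Ω)
    (B : ℕ → MeasurableSpace Ω) (c : ℕ → ℝ) (X : ℕ → Ω → ℝ) : Prop :=
  Monotone B ∧ (∀ k, B k ≤ mΩ) ∧ B 0 = ⊥ ∧ (∀ k, 1 ≤ k → 0 < c k) ∧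
  (∀ k, 1 ≤ k → StronglyMeasurable[B k] (X k)) ∧
  (∀ k, 1 ≤ k → Integrable (X k) P) ∧
  (∀ k, 1 ≤ k → P[X k | B (k - 1)] =ᵐ[P] 0) ∧
  (∀ k, 1 ≤ k → ∀ t : ℝ, Integrable (fun ω => Real.exp (t * X k ω)) P ∧
    P[(fun ω => Real.exp (t * X k ω)) | B (k - 1)] ≤ᵐ[P] fun _ => Real.exp (c k ^ 2 * t ^ 2 / 2))

/-- A sequence whose partial sums have d_{ũ,α}-subgaussian increments. -/
def SubgaussianIncrements {Ω : Type*} [MeasurableSpace Ω] (P : Measure Ω)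
    (u : ℕ → ℝ) (α : ℝ) (Y : ℕ → Ω → ℝ) : Prop :=
  ∀ n m : ℕ, n < m → ∀ l : ℝ,
    ∫⁻ ω, ENNReal.ofReal (Real.exp (l * ∑ k ∈ Finset.Icc (n + 1) m, Y k ω)) ∂P
      ≤ ENNReal.ofReal
          (Real.exp (((∑ k ∈ Finset.Icc (n + 1) m, u k) ^ α) ^ 2 * l ^ 2 / 2))

/-!
After the scaling `ε = u ^ α t` the integral becomes `u ^ α ∫₀¹ √(log (2 t ^ (-1/α) + 1)) dt`.
On `(0, 1)` we have `2 t ^ (-1/α) + 1 ≤ 3 t ^ (-1/α)`, so the integrand is at most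
`√((α log 3 - log t) / α)`, and the substitution `t = exp (α log 3 - y²)` turns the integral of
this majorant into `(2 · 3 ^ α / √α) ∫_{√(α log 3)}^∞ y² e^{-y²} dy`; it remains to note that
`2 · 3 ^ α ≤ 4 ^ (α + 1) = 2 ^ (2α + 2)`.
-/

section GaussianSubstitution

variable {c : ℝ}

lemma strictAntiOn_exp_sub_sq : StrictAntiOn (fun y => exp (c - y ^ 2)) (Set.Ici 0) := by
  intro x hx y _ hxy
  have : x ^ 2 < y ^ 2 := pow_lt_pow_left₀ hxy hx two_ne_zero
  exact exp_lt_exp.2 (by linarith)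

lemma image_exp_sub_sq_Ioi_sqrt (hc : 0 ≤ c) :
    (fun y => exp (c - y ^ 2)) '' Set.Ioi (√c) = Set.Ioo 0 1 := by
  ext t
  constructor
  · rintro ⟨y, hy, rfl⟩
    have : c < y ^ 2 := by simpa using (sqrt_lt' ((sqrt_nonneg c).trans_lt hy)).1 hy
    exact ⟨exp_pos _, exp_lt_one_iff.2 (by linarith)⟩
  · rintro ⟨ht0, ht1⟩
    have hlog : log t < 0 := log_neg ht0 ht1
    refine ⟨√(c - log t), sqrt_lt_sqrt hc (by linarith), ?_⟩
    simp only [sq_sqrt (by linarith : 0 ≤ c - log t), sub_sub_cancel, exp_log ht0]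

lemma hasDerivAt_exp_sub_sq (y : ℝ) :
    HasDerivAt (fun y => exp (c - y ^ 2)) (exp (c - y ^ 2) * -(2 * y)) y := by
  simpa using ((hasDerivAt_pow 2 y).const_sub c).exp

lemma injOn_exp_sub_sq_Ioi_sqrt : InjOn (fun y => exp (c - y ^ 2)) (Set.Ioi √c) :=
  strictAntiOn_exp_sub_sq.injOn.mono fun _ hy => (sqrt_nonneg c).trans (le_of_lt hy)

lemma abs_exp_sub_sq_mul_neg_two_mul {y : ℝ} (hy : 0 ≤ y) :
    |exp (c - y ^ 2) * -(2 * y)| = 2 * y * exp (c - y ^ 2) := by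
  rw [abs_mul, abs_neg, abs_of_pos (exp_pos _), abs_of_nonneg (by positivity), mul_comm]

lemma integrableOn_Ioo_zero_one_iff_exp_sub_sq (hc : 0 ≤ c) (g : ℝ → ℝ) :
    IntegrableOn g (Set.Ioo 0 1) ↔
      IntegrableOn (fun y => 2 * y * exp (c - y ^ 2) * g (exp (c - y ^ 2))) (Set.Ioi √c) := by
  rw [← image_exp_sub_sq_Ioi_sqrt hc, integrableOn_image_iff_integrableOn_abs_deriv_smul
    measurableSet_Ioi (fun y _ => (hasDerivAt_exp_sub_sq y).hasDerivWithinAt)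
    injOn_exp_sub_sq_Ioi_sqrt]
  refine integrableOn_congr_fun (fun y hy => ?_) measurableSet_Ioi
  rw [smul_eq_mul, abs_exp_sub_sq_mul_neg_two_mul ((sqrt_nonneg c).trans (le_of_lt hy))]

lemma integral_Ioo_zero_one_eq_integral_exp_sub_sq (hc : 0 ≤ c) (g : ℝ → ℝ) :
    ∫ t in Set.Ioo 0 1, g t =
      ∫ y in Set.Ioi √c, 2 * y * exp (c - y ^ 2) * g (exp (c - y ^ 2)) := by
  rw [← image_exp_sub_sq_Ioi_sqrt hc, integral_image_eq_integral_abs_deriv_smul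
    measurableSet_Ioi (fun y _ => (hasDerivAt_exp_sub_sq y).hasDerivWithinAt)
    injOn_exp_sub_sq_Ioi_sqrt]
  refine setIntegral_congr_fun measurableSet_Ioi fun y hy => ?_
  rw [smul_eq_mul, abs_exp_sub_sq_mul_neg_two_mul ((sqrt_nonneg c).trans (le_of_lt hy))]

end GaussianSubstitution

section Majorant

variable {c α : ℝ}

lemma integrable_sq_mul_exp_neg_sq : Integrable fun y : ℝ => y ^ 2 * exp (-y ^ 2) := by
  simpa [rpow_two] using integrable_rpow_mul_exp_neg_mul_sq one_pos (by norm_num : (-1 : ℝ) < 2)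

lemma two_mul_mul_exp_sub_sq_mul_sqrt_sub_log_div (hα : 0 < α) {y : ℝ} (hy : 0 ≤ y) :
    2 * y * exp (c - y ^ 2) * √((c - log (exp (c - y ^ 2))) / α) =
      2 * exp c / √α * (y ^ 2 * exp (-y ^ 2)) := by
  have hα' : 0 < √α := sqrt_pos.2 hα
  rw [log_exp, sub_sub_cancel, sqrt_div (sq_nonneg y), sqrt_sq hy, sub_eq_add_neg, exp_add]
  field_simp

lemma integrableOn_sqrt_sub_log_div (hc : 0 ≤ c) (hα : 0 < α) :
    IntegrableOn (fun t => √((c - log t) / α)) (Set.Ioo 0 1) := by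
  rw [integrableOn_Ioo_zero_one_iff_exp_sub_sq hc]
  refine IntegrableOn.congr_fun
    (integrable_sq_mul_exp_neg_sq.const_mul (2 * exp c / √α)).integrableOn (fun y hy => ?_)
    measurableSet_Ioi
  exact (two_mul_mul_exp_sub_sq_mul_sqrt_sub_log_div hα ((sqrt_nonneg c).trans (le_of_lt hy))).symm

lemma integral_sqrt_sub_log_div (hc : 0 ≤ c) (hα : 0 < α) :
    ∫ t in Set.Ioo 0 1, √((c - log t) / α) =
      2 * exp c / √α * ∫ y in Set.Ioi √c, y ^ 2 * exp (-y ^ 2) := by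
  rw [integral_Ioo_zero_one_eq_integral_exp_sub_sq hc, ← integral_const_mul]
  refine setIntegral_congr_fun measurableSet_Ioi fun y hy => ?_
  exact two_mul_mul_exp_sub_sq_mul_sqrt_sub_log_div hα ((sqrt_nonneg c).trans (le_of_lt hy))

end Majorant

lemma log_two_mul_rpow_add_one_le {α t : ℝ} (hα : 0 < α) (ht0 : 0 < t) (ht1 : t ≤ 1) :
    log (2 * t ^ (-(1 / α)) + 1) ≤ (α * log 3 - log t) / α := by
  have hone : 1 ≤ t ^ (-(1 / α)) :=
    one_le_rpow_of_pos_of_le_one_of_nonpos ht0 ht1 (neg_nonpos.2 (by positivity))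
  calc log (2 * t ^ (-(1 / α)) + 1) ≤ log (3 * t ^ (-(1 / α))) :=
        log_le_log (by positivity) (by linarith)
    _ = (α * log 3 - log t) / α := by
        rw [log_mul three_ne_zero (by positivity), log_rpow ht0]
        field_simp
        ring

lemma two_mul_three_rpow_le {α : ℝ} (hα : 0 ≤ α) : 2 * (3 : ℝ) ^ α ≤ 2 ^ (2 * α + 2) := by
  have h34 : (3 : ℝ) ^ α ≤ 4 ^ α := rpow_le_rpow (by norm_num) (by norm_num) hα
  have h4 : (2 : ℝ) ^ (2 * α + 2) = 4 * 4 ^ α := by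
    rw [rpow_add two_pos, rpow_mul zero_le_two, rpow_two]
    norm_num [mul_comm]
  rw [h4]
  linarith [rpow_nonneg (by norm_num : (0 : ℝ) ≤ 3) α]

theorem integral_sqrt_log_two_mul_rpow_add_one_le {α : ℝ} (hα : 0 < α) :
    ∫ t in (0 : ℝ)..1, √(log (2 * t ^ (-(1 / α)) + 1)) ≤ Cconst α := by
  have hc : 0 ≤ α * log 3 := by positivity
  rw [intervalIntegral.integral_of_le zero_le_one, integral_Ioc_eq_integral_Ioo]
  calc ∫ t in Set.Ioo 0 1, √(log (2 * t ^ (-(1 / α)) + 1))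
      ≤ ∫ t in Set.Ioo 0 1, √((α * log 3 - log t) / α) :=
        setIntegral_mono_of_nonneg (fun _ _ => sqrt_nonneg _)
          (fun t ht => sqrt_le_sqrt (log_two_mul_rpow_add_one_le hα ht.1 ht.2.le))
          (integrableOn_sqrt_sub_log_div hc hα)
    _ = 2 * 3 ^ α / √α * ∫ y in Set.Ioi √(α * log 3), y ^ 2 * exp (-y ^ 2) := by
        rw [integral_sqrt_sub_log_div hc hα, mul_comm α, ← rpow_def_of_pos three_pos]
    _ ≤ Cconst α := by
        unfold Cconst
        gcongr ?_ / _ * _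
        exact two_mul_three_rpow_le hα.le

lemma mul_mul_rpow_neg_inv {u t α : ℝ} (hu : 0 < u) (ht : 0 ≤ t) (hα : α ≠ 0) :
    u * (t * u ^ α) ^ (-(1 / α)) = t ^ (-(1 / α)) := by
  rw [mul_rpow ht (rpow_nonneg hu.le _), ← rpow_mul hu.le, show α * -(1 / α) = -1 by field_simp,
    rpow_neg_one]
  field_simp

/-- The entropy-integral estimate: ∫₀^{u^α} √(ln(2u ε^{−1/α} + 1)) dε ≤ C(α) u^α. -/
theorem stmt5 (u α : ℝ) (hu : 0 < u) (hα : 0 < α) :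
    ∫ ε in (0 : ℝ)..(u ^ α),
        Real.sqrt (Real.log (2 * u * ε ^ (-(1 / α)) + 1))
      ≤ Cconst α * u ^ α := by
  have hrescale : ∫ t in (0 : ℝ)..1, √(log (2 * u * (t * u ^ α) ^ (-(1 / α)) + 1)) =
      ∫ t in (0 : ℝ)..1, √(log (2 * t ^ (-(1 / α)) + 1)) :=
    intervalIntegral.integral_congr fun t ht => by
      rw [Set.uIcc_of_le zero_le_one] at ht
      simp only [mul_assoc, mul_mul_rpow_neg_inv hu ht.1 hα.ne']
  calc ∫ ε in (0 : ℝ)..(u ^ α), √(log (2 * u * ε ^ (-(1 / α)) + 1))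
      = u ^ α * ∫ t in (0 : ℝ)..1, √(log (2 * t ^ (-(1 / α)) + 1)) := by
        rw [← hrescale, ← smul_eq_mul (u ^ α), intervalIntegral.smul_integral_comp_mul_right
          (fun ε => √(log (2 * u * ε ^ (-(1 / α)) + 1))), zero_mul, one_mul]
    _ ≤ u ^ α * Cconst α := by
        gcongr
        exact integral_sqrt_log_two_mul_rpow_add_one_le hα
    _ = Cconst α * u ^ α := mul_comm _ _
end

section
/- Let (X_k)_{k≥1} be a sequence of subgaussian random variables with subgaussian standards τ_k = τ(X_k). Then for all 0 ≤ i < j and all t ∈ ℝ, E[exp(t Σ_{k=i+1}^{j} X_k)] ≤ exp( t² (Σ_{k=i+1}^{j} τ_k)² / 2 ). -/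
open MeasureTheory ProbabilityTheory Real Filter Finset Set Topology

/-!
Choose weights `p k = c k / S` with `S = ∑ c k`. Hölder's inequality for the product
`∏ exp(λ_k X_k) ^ p_k` with `λ_k = t S / c k` bounds `E[exp(t ∑ X_k)]` by
`∏ exp(c_k² λ_k² / 2) ^ p_k = exp(S² t² / 2)`. Strictly positive constants are needed for the
weights, so one first proves the bound for `τ_k + ε` and lets `ε → 0`; the infimum defining
`τ_k` is attained because the admissible constants form a set closed from above.
-/

lemma ENNReal.ofReal_exp_rpow (x p : ℝ) :
    ENNReal.ofReal (exp x) ^ p = ENNReal.ofReal (exp (x * p)) := by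
  rw [ENNReal.ofReal_rpow_of_pos (exp_pos x), exp_mul]

lemma ENNReal.prod_ofReal_exp {ι : Type*} (s : Finset ι) (f : ι → ℝ) :
    ∏ k ∈ s, ENNReal.ofReal (exp (f k)) = ENNReal.ofReal (exp (∑ k ∈ s, f k)) := by
  rw [← ENNReal.ofReal_prod_of_nonneg fun k _ => (exp_pos _).le, exp_sum]

section Subgaussian

variable {Ω : Type*} [MeasurableSpace Ω] {P : Measure Ω}

lemma IsSubgaussianWith.mono {X : Ω → ℝ} {c c' : ℝ} (h : IsSubgaussianWith P X c)
    (hcc' : c ≤ c') : IsSubgaussianWith P X c' := by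
  refine ⟨h.1.trans hcc', fun t => (h.2 t).trans ?_⟩
  gcongr
  exact h.1

lemma IsSubgaussianWith.of_forall_gt {X : Ω → ℝ} {c : ℝ} (hc : 0 ≤ c)
    (h : ∀ c' > c, IsSubgaussianWith P X c') : IsSubgaussianWith P X c := by
  refine ⟨hc, fun t => ?_⟩
  have hcont : Continuous fun c' : ℝ => ENNReal.ofReal (exp (c' ^ 2 * t ^ 2 / 2)) :=
    ENNReal.continuous_ofReal.comp (by fun_prop)
  refine ge_of_tendsto ((hcont.tendsto c).mono_left (nhdsWithin_le_nhds (s := Ioi c))) ?_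
  filter_upwards [self_mem_nhdsWithin] with c' hc' using (h c' hc').2 t

lemma subgStd_nonneg (X : Ω → ℝ) : 0 ≤ subgStd P X :=
  Real.sInf_nonneg fun _ hc => hc.1

lemma Subgaussian.isSubgaussianWith_subgStd {X : Ω → ℝ} (h : Subgaussian P X) :
    IsSubgaussianWith P X (subgStd P X) := by
  refine .of_forall_gt (subgStd_nonneg X) fun c' hc' => ?_
  obtain ⟨d, hd, hdc'⟩ := exists_lt_of_csInf_lt h hc'
  exact IsSubgaussianWith.mono hd hdc'.le

lemma isSubgaussianWith_sum_of_pos {ι : Type*} {X : ι → Ω → ℝ} {c : ι → ℝ} {s : Finset ι}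
    (hs : s.Nonempty) (hX : ∀ k ∈ s, AEMeasurable (X k) P) (hc : ∀ k ∈ s, 0 < c k)
    (h : ∀ k ∈ s, IsSubgaussianWith P (X k) (c k)) :
    IsSubgaussianWith P (fun ω => ∑ k ∈ s, X k ω) (∑ k ∈ s, c k) := by
  set S := ∑ k ∈ s, c k
  have hS : 0 < S := Finset.sum_pos hc hs
  refine ⟨hS.le, fun t => ?_⟩
  have hp : ∑ k ∈ s, c k / S = 1 := by rw [← Finset.sum_div, div_self hS.ne']
  have hsplit : ∀ ω, ENNReal.ofReal (exp (t * ∑ k ∈ s, X k ω))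
      = ∏ k ∈ s, ENNReal.ofReal (exp (t * S / c k * X k ω)) ^ (c k / S) := by
    intro ω
    rw [Finset.mul_sum, ← ENNReal.prod_ofReal_exp]
    refine Finset.prod_congr rfl fun k hk => ?_
    rw [ENNReal.ofReal_exp_rpow]
    field_simp [(hc k hk).ne', hS.ne']
  calc ∫⁻ ω, ENNReal.ofReal (exp (t * ∑ k ∈ s, X k ω)) ∂P
      = ∫⁻ ω, ∏ k ∈ s, ENNReal.ofReal (exp (t * S / c k * X k ω)) ^ (c k / S) ∂P :=
        lintegral_congr hsplit
    _ ≤ ∏ k ∈ s, (∫⁻ ω, ENNReal.ofReal (exp (t * S / c k * X k ω)) ∂P) ^ (c k / S) :=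
        ENNReal.lintegral_prod_norm_pow_le s
          (fun k hk => (((hX k hk).const_mul _).exp).ennreal_ofReal) hp
          fun k hk => (div_pos (hc k hk) hS).le
    _ ≤ ∏ k ∈ s, ENNReal.ofReal (exp (c k ^ 2 * (t * S / c k) ^ 2 / 2)) ^ (c k / S) :=
        Finset.prod_le_prod' fun k hk =>
          ENNReal.rpow_le_rpow ((h k hk).2 _) (div_pos (hc k hk) hS).le
    _ = ENNReal.ofReal (exp (S ^ 2 * t ^ 2 / 2)) := by
      simp_rw [ENNReal.ofReal_exp_rpow, ENNReal.prod_ofReal_exp]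
      congr 2
      calc ∑ k ∈ s, c k ^ 2 * (t * S / c k) ^ 2 / 2 * (c k / S)
          = ∑ k ∈ s, c k * (S * t ^ 2 / 2) :=
            Finset.sum_congr rfl fun k hk => by field_simp [(hc k hk).ne', hS.ne']
        _ = S ^ 2 * t ^ 2 / 2 := by rw [← Finset.sum_mul]; ring

lemma isSubgaussianWith_sum {ι : Type*} {X : ι → Ω → ℝ} {c : ι → ℝ} {s : Finset ι}
    (hs : s.Nonempty) (hX : ∀ k ∈ s, AEMeasurable (X k) P)
    (h : ∀ k ∈ s, IsSubgaussianWith P (X k) (c k)) :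
    IsSubgaussianWith P (fun ω => ∑ k ∈ s, X k ω) (∑ k ∈ s, c k) := by
  refine .of_forall_gt (Finset.sum_nonneg fun k hk => (h k hk).1) fun c' hc' => ?_
  set ε := (c' - ∑ k ∈ s, c k) / #s
  have hε : 0 < ε := div_pos (sub_pos.2 hc') (Nat.cast_pos.2 hs.card_pos)
  have hsum : ∑ k ∈ s, (c k + ε) = c' := by
    rw [Finset.sum_add_distrib, Finset.sum_const, nsmul_eq_mul,
      mul_div_cancel₀ _ (Nat.cast_ne_zero.2 hs.card_pos.ne')]
    ring
  rw [← hsum]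
  exact isSubgaussianWith_sum_of_pos hs hX (fun k hk => by linarith [(h k hk).1])
    fun k hk => (h k hk).mono (by linarith)

end Subgaussian

theorem stmt6_general {Ω : Type*} [MeasurableSpace Ω] (P : Measure Ω)
    (X : ℕ → Ω → ℝ) (hmeas : ∀ k, 1 ≤ k → Measurable (X k)) (τ : ℕ → ℝ)
    (hsub : ∀ k, 1 ≤ k → Subgaussian P (X k))
    (hτ : ∀ k, 1 ≤ k → τ k = subgStd P (X k)) :
    ∀ i j : ℕ, i < j → ∀ t : ℝ,
      ∫⁻ ω, ENNReal.ofReal (Real.exp (t * ∑ k ∈ Finset.Icc (i + 1) j, X k ω)) ∂P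
        ≤ ENNReal.ofReal
            (Real.exp (t ^ 2 * (∑ k ∈ Finset.Icc (i + 1) j, τ k) ^ 2 / 2)) := by
  intro i j hij t
  have hk_pos : ∀ k ∈ Finset.Icc (i + 1) j, 1 ≤ k := fun k hk => by
    linarith [(Finset.mem_Icc.1 hk).1]
  have hsum := isSubgaussianWith_sum (P := P) (c := τ) ⟨i + 1, by simp [hij]⟩
    (fun k hk => (hmeas k (hk_pos k hk)).aemeasurable)
    fun k hk => hτ k (hk_pos k hk) ▸ (hsub k (hk_pos k hk)).isSubgaussianWith_subgStd
  simpa only [mul_comm (t ^ 2)] using hsum.2 t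

/-- Remark 3.4: partial sums of a subgaussian sequence form a δ-subgaussian series. -/
theorem stmt6 {Ω : Type*} [MeasurableSpace Ω] (P : Measure Ω) [IsProbabilityMeasure P]
    (X : ℕ → Ω → ℝ) (hmeas : ∀ k, 1 ≤ k → Measurable (X k)) (τ : ℕ → ℝ)
    (hsub : ∀ k, 1 ≤ k → Subgaussian P (X k))
    (hτ : ∀ k, 1 ≤ k → τ k = subgStd P (X k)) :
    ∀ i j : ℕ, i < j → ∀ t : ℝ,
      ∫⁻ ω, ENNReal.ofReal (Real.exp (t * ∑ k ∈ Finset.Icc (i + 1) j, X k ω)) ∂P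
        ≤ ENNReal.ofReal
            (Real.exp (t ^ 2 * (∑ k ∈ Finset.Icc (i + 1) j, τ k) ^ 2 / 2)) :=
  stmt6_general P X hmeas τ hsub hτ
end

section
/- Let β > 0 and let (X_k)_{k≥1} be a (𝓑, c²)-conditionally subgaussian sequence with sup_{k≥1} c_k < ∞. Then P-almost surely, lim_{n→∞} (n (ln n)^{1+β})^{−1/2} Σ_{k=1}^{n} X_k = 0. -/
open MeasureTheory ProbabilityTheory Real Filter Finset Set Topology

/-! The partial sums `Sₙ = X₁ + ⋯ + Xₙ` have a subgaussian moment generating function with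
variance proxy `c₁² + ⋯ + cₙ² ≤ n M²` (`M ≥ sup cₖ`): conditioning on `𝓑ₙ₋₁` peels off the
last increment. The Chernoff bound then gives
`P(|Sₙ| ≥ ε √(n (ln n)^{1+β})) ≤ 2 exp(-ε² (ln n)^{1+β} / (2M²))`, which is summable because
`(ln n)^{1+β}` eventually exceeds `2 ln n`, and Borel–Cantelli concludes. -/

open scoped NNReal ENNReal

namespace ProbabilityTheory.HasSubgaussianMGF

variable {Ω : Type*} {mΩ : MeasurableSpace Ω} {μ : Measure Ω}

lemma mono {X : Ω → ℝ} {c c' : ℝ≥0} (h : HasSubgaussianMGF X c μ) (hcc' : c ≤ c') :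
    HasSubgaussianMGF X c' μ where
  integrable_exp_mul := h.integrable_exp_mul
  mgf_le t := (h.mgf_le t).trans <| exp_le_exp.2 <| by gcongr

lemma measureReal_abs_ge_le [IsFiniteMeasure μ] {X : Ω → ℝ} {c : ℝ≥0}
    (h : HasSubgaussianMGF X c μ) {ε : ℝ} (hε : 0 ≤ ε) :
    μ.real {ω | ε ≤ |X ω|} ≤ 2 * exp (-ε ^ 2 / (2 * c)) := by
  have hsub : {ω | ε ≤ |X ω|} ⊆ {ω | ε ≤ X ω} ∪ {ω | ε ≤ (-X) ω} := fun ω (hω : ε ≤ |X ω|) =>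
    le_abs.1 hω
  calc μ.real {ω | ε ≤ |X ω|}
      ≤ μ.real {ω | ε ≤ X ω} + μ.real {ω | ε ≤ (-X) ω} :=
        (measureReal_mono hsub).trans (measureReal_union_le _ _)
    _ ≤ exp (-ε ^ 2 / (2 * c)) + exp (-ε ^ 2 / (2 * c)) :=
        add_le_add (h.measure_ge_le hε) (h.neg.measure_ge_le hε)
    _ = 2 * exp (-ε ^ 2 / (2 * c)) := by ring

/-- A counterpart of `HasSubgaussianMGF.add_of_hasCondSubgaussianMGF` that needs no standard Borel
structure on `Ω`: the conditional bound is stated with the conditional expectation itself. -/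
lemma add_of_condExp_exp_mul_le [IsFiniteMeasure μ] {m : MeasurableSpace Ω} (hm : m ≤ mΩ)
    {X Y : Ω → ℝ} {cX cY : ℝ≥0} (hXm : StronglyMeasurable[m] X) (hX : HasSubgaussianMGF X cX μ)
    (hY_int : ∀ t, Integrable (fun ω => exp (t * Y ω)) μ)
    (hY : ∀ t, μ[fun ω => exp (t * Y ω) | m] ≤ᵐ[μ] fun _ => exp (cY * t ^ 2 / 2)) :
    HasSubgaussianMGF (X + Y) (cX + cY) μ := by
  have hYLp (t : ℝ) : MemLp (fun ω => exp (t * Y ω)) 2 μ := by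
    refine (memLp_two_iff_integrable_sq (hY_int t).1).2 ?_
    simpa only [← exp_nat_mul, Nat.cast_ofNat, mul_assoc] using hY_int (2 * t)
  have hprod (t : ℝ) : (fun ω => exp (t * (X + Y) ω))
      = (fun ω => exp (t * X ω)) * fun ω => exp (t * Y ω) := by
    ext ω; simp only [Pi.add_apply, Pi.mul_apply, mul_add, exp_add]
  have hint (t : ℝ) : Integrable (fun ω => exp (t * (X + Y) ω)) μ :=
    hprod t ▸ (by simpa using hX.memLp_exp_mul t 2 : MemLp _ 2 μ).integrable_mul (hYLp t)
  refine ⟨hint, fun t => ?_⟩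
  have hXexp_m : StronglyMeasurable[m] fun ω => exp (t * X ω) :=
    continuous_exp.comp_stronglyMeasurable (hXm.const_mul t)
  have hpull := condExp_mul_of_stronglyMeasurable_left hXexp_m (hprod t ▸ hint t) (hY_int t)
  calc mgf (X + Y) μ t
      = ∫ ω, (μ[(fun ω => exp (t * X ω)) * fun ω => exp (t * Y ω) | m]) ω ∂μ := by
        rw [integral_condExp hm, ← hprod]; rfl
    _ = ∫ ω, exp (t * X ω) * (μ[fun ω => exp (t * Y ω) | m]) ω ∂μ := integral_congr_ae hpull
    _ ≤ ∫ ω, exp (t * X ω) * exp (cY * t ^ 2 / 2) ∂μ := by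
        refine integral_mono_ae (integrable_condExp.congr hpull)
          ((hX.integrable_exp_mul t).mul_const _) ?_
        filter_upwards [hY t] with ω hω
        exact mul_le_mul_of_nonneg_left hω (exp_pos _).le
    _ = mgf X μ t * exp (cY * t ^ 2 / 2) := integral_mul_const _ _
    _ ≤ exp (cX * t ^ 2 / 2) * exp (cY * t ^ 2 / 2) := by
        gcongr
        exact hX.mgf_le t
    _ = exp (↑(cX + cY) * t ^ 2 / 2) := by rw [← exp_add]; push_cast; congr 1; ring

end ProbabilityTheory.HasSubgaussianMGF

lemma CondSubgaussianSeq.hasSubgaussianMGF_sum {Ω : Type*} {mΩ : MeasurableSpace Ω}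
    {P : Measure Ω} [IsProbabilityMeasure P] {B : ℕ → MeasurableSpace Ω} {c : ℕ → ℝ}
    {X : ℕ → Ω → ℝ} (hX : CondSubgaussianSeq P B c X) (n : ℕ) :
    HasSubgaussianMGF (fun ω => ∑ k ∈ Icc 1 n, X k ω) (∑ k ∈ Icc 1 n, (c k).toNNReal ^ 2) P := by
  obtain ⟨hmono, hle, -, hc, hmeas, -, -, hmgf⟩ := hX
  induction n with
  | zero => simp [HasSubgaussianMGF.fun_zero]
  | succ n ih =>
    have hn : 1 ≤ n + 1 := le_add_self
    have hSm : StronglyMeasurable[B n] fun ω => ∑ k ∈ Icc 1 n, X k ω :=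
      Finset.stronglyMeasurable_fun_sum _ fun k hk =>
        (hmeas k (mem_Icc.1 hk).1).mono (hmono (mem_Icc.1 hk).2)
    have hstep := ih.add_of_condExp_exp_mul_le (hle n) hSm (fun t => (hmgf _ hn t).1)
      (cY := (c (n + 1)).toNNReal ^ 2) fun t => by
        simpa [Real.coe_toNNReal _ (hc _ hn).le] using (hmgf _ hn t).2
    simp_rw [sum_Icc_succ_top hn]
    exact hstep

lemma summable_exp_neg_mul_log_rpow {K p : ℝ} (hK : 0 < K) (hp : 1 < p) :
    Summable fun n : ℕ => exp (-(K * log n ^ p)) := by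
  have hlog : Tendsto (fun n : ℕ => log n) atTop atTop :=
    tendsto_log_atTop.comp tendsto_natCast_atTop_atTop
  have hlarge : Tendsto (fun n : ℕ => K * log n ^ (p - 1)) atTop atTop :=
    ((tendsto_rpow_atTop (sub_pos.2 hp)).comp hlog).const_mul_atTop hK
  refine (summable_nat_pow_inv.2 one_lt_two).of_norm_bounded_eventually_nat ?_
  filter_upwards [hlarge.eventually_ge_atTop 2, eventually_ge_atTop 2] with n h2 hn
  have hn0 : (0 : ℝ) < n := by positivity
  have hlogn : 0 < log n := log_pos (by exact_mod_cast hn)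
  have hsplit : log n ^ p = log n ^ (p - 1) * log n := by
    rw [← rpow_add_one hlogn.ne', sub_add_cancel]
  calc ‖exp (-(K * log n ^ p))‖ = exp (-(K * log n ^ p)) := norm_of_nonneg (exp_pos _).le
    _ ≤ exp (-(2 * log n)) := by
        rw [hsplit, ← mul_assoc]
        gcongr
    _ = ((n : ℝ) ^ 2)⁻¹ := by
        rw [exp_neg, mul_comm, exp_mul, exp_log hn0, rpow_two]

section BorelCantelli

variable {Ω : Type*} {mΩ : MeasurableSpace Ω} {μ : Measure Ω}

lemma ae_tendsto_zero_of_forall_ae_eventually_abs_lt {f : ℕ → Ω → ℝ}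
    (h : ∀ ε > 0, ∀ᵐ ω ∂μ, ∀ᶠ n in atTop, |f n ω| < ε) :
    ∀ᵐ ω ∂μ, Tendsto (fun n => f n ω) atTop (𝓝 0) := by
  have hall : ∀ᵐ ω ∂μ, ∀ m : ℕ, ∀ᶠ n in atTop, |f n ω| < 1 / ((m : ℝ) + 1) :=
    ae_all_iff.2 fun m => h _ (by positivity)
  filter_upwards [hall] with ω hω
  refine Metric.tendsto_nhds.2 fun ε hε => ?_
  obtain ⟨m, hm⟩ := exists_nat_one_div_lt hε
  filter_upwards [hω m] with n hn
  rw [dist_zero_right, norm_eq_abs]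
  exact hn.trans hm

lemma ae_tendsto_mul_zero_of_hasSubgaussianMGF [IsFiniteMeasure μ] {S : ℕ → Ω → ℝ}
    {v : ℕ → ℝ≥0} {w : ℕ → ℝ} (hS : ∀ n, HasSubgaussianMGF (S n) (v n) μ)
    (hsum : ∀ ε > 0, Summable fun n => exp (-(ε / w n) ^ 2 / (2 * v n))) :
    ∀ᵐ ω ∂μ, Tendsto (fun n => w n * S n ω) atTop (𝓝 0) := by
  refine ae_tendsto_zero_of_forall_ae_eventually_abs_lt fun ε hε => ?_
  have htail (n : ℕ) : μ.real {ω | ε ≤ |w n * S n ω|} ≤ 2 * exp (-(ε / w n) ^ 2 / (2 * v n)) :=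
    calc μ.real {ω | ε ≤ |w n * S n ω|} ≤ μ.real {ω | ε / |w n| ≤ |S n ω|} :=
          measureReal_mono fun ω (hω : ε ≤ |w n * S n ω|) =>
            div_le_of_le_mul₀ (abs_nonneg _) (abs_nonneg _) (by rwa [abs_mul, mul_comm] at hω)
      _ ≤ 2 * exp (-(ε / w n) ^ 2 / (2 * v n)) := by
          simpa only [div_pow, sq_abs] using
            (hS n).measureReal_abs_ge_le (ε := ε / |w n|) (by positivity)
  have hfin : ∑' n, μ {ω | ε ≤ |w n * S n ω|} ≠ ∞ := by
    refine ne_top_of_le_ne_top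
      (ENNReal.ofReal_ne_top (r := ∑' n, 2 * exp (-(ε / w n) ^ 2 / (2 * v n)))) ?_
    rw [ENNReal.ofReal_tsum_of_nonneg (fun n => by positivity) ((hsum ε hε).mul_left 2)]
    exact ENNReal.tsum_le_tsum fun n =>
      (ENNReal.le_ofReal_iff_toReal_le (measure_ne_top _ _) (by positivity)).2 (htail n)
  filter_upwards [ae_eventually_notMem hfin] with ω hω
  exact hω.mono fun n hn => not_le.1 hn

end BorelCantelli

/-- Corollary 4.13 for (𝓑, c²)-conditionally subgaussian sequences with bounded c. -/
theorem stmt19 {Ω : Type*} {mΩ : MeasurableSpace Ω} (P : Measure Ω) [IsProbabilityMeasure P]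
    (β : ℝ) (hβ : 0 < β)
    (B : ℕ → MeasurableSpace Ω) (c : ℕ → ℝ) (X : ℕ → Ω → ℝ)
    (hCS : CondSubgaussianSeq P B c X)
    (hbdd : ∃ M : ℝ, ∀ k, 1 ≤ k → c k ≤ M) :
    ∀ᵐ ω ∂P, Tendsto
      (fun n : ℕ => ((n : ℝ) * Real.log n ^ (1 + β)) ^ (-(1 / 2) : ℝ) *
        ∑ k ∈ Finset.Icc 1 n, X k ω) atTop (𝓝 0) := by
  obtain ⟨M₀, hM₀⟩ := hbdd
  set M : ℝ≥0 := (max M₀ 1).toNNReal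
  have hS (n : ℕ) : HasSubgaussianMGF (fun ω => ∑ k ∈ Icc 1 n, X k ω) (n * M ^ 2) P := by
    refine (hCS.hasSubgaussianMGF_sum n).mono ?_
    calc ∑ k ∈ Icc 1 n, (c k).toNNReal ^ 2 ≤ ∑ k ∈ Icc 1 n, M ^ 2 :=
          sum_le_sum fun k hk => by
            gcongr
            exact Real.toNNReal_le_toNNReal ((hM₀ k (mem_Icc.1 hk).1).trans (le_max_left _ _))
      _ = n * M ^ 2 := by simp
  refine ae_tendsto_mul_zero_of_hasSubgaussianMGF hS fun ε hε => ?_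
  refine (summable_exp_neg_mul_log_rpow (K := ε ^ 2 / (2 * M ^ 2)) (by positivity)
    (lt_add_of_pos_right 1 hβ)).congr_atTop ?_
  filter_upwards [eventually_ge_atTop 2] with n hn
  have hlog : 0 < log n := log_pos (by exact_mod_cast hn)
  have hr : 0 < (n : ℝ) * log n ^ (1 + β) := by positivity
  rw [rpow_neg hr.le, ← sqrt_eq_rpow, div_inv_eq_mul, mul_pow, sq_sqrt hr.le]
  push_cast
  field_simp
end
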